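/- For every n ≥ 2 and any splits U, V, T of the same 2n points, ‖U,T‖ + ‖V,T‖ ≤ 2n − d(U,V). -/

import Mathlib

/-!
If `S ≠ T`, take a chord `{x, y}` of `T` missing from `S` whose clockwise arc from `x` to `y` is
as short as possible. By minimality `S` and `T` agree inside that arc, so the `S`-partners `a` of
`x` and `b` of `y` lie outside it, in the clockwise order `x, y, b, a`. Replacing `{x, a}, {y, b}`
by `{x, y}, {a, b}` is then a split move that keeps `S` non-crossing and detaches the doubled chord
`{x, y}` as a circle of its own. Iterating gives `d(S, T) ≤ n - ‖S, T‖`, and the theorem follows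
from `d(U, V) ≤ d(U, T) + d(V, T)`.
-/

attribute [local instance] Classical.propDecidable

namespace MultiCrossing

/-- `x` lies strictly in the open clockwise arc from `a` to `b` on the circle `ZMod (2*n)`. -/
def StrictBtw (n : ℕ) (a b x : ZMod (2 * n)) : Prop :=
  0 < (x - a).val ∧ (x - a).val < (b - a).val

/-- Two chords (with four distinct endpoints) cross: exactly one of the endpoints of one
chord lies in the open clockwise arc strictly between the endpoints of the other. -/
def Crosses (n : ℕ) (e f : Finset (ZMod (2 * n))) : Prop :=
  ∃ a b c d : ZMod (2 * n), e = {a, b} ∧ f = {c, d} ∧ a ≠ b ∧ c ≠ d ∧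
    Disjoint e f ∧ Xor' (StrictBtw n a b c) (StrictBtw n a b d)

/-- A split: a non-crossing perfect matching of the `2*n` points `ZMod (2*n)`. -/
structure IsSplit (n : ℕ) (S : Finset (Finset (ZMod (2 * n)))) : Prop where
  card_two : ∀ e ∈ S, e.card = 2
  partitions : ∀ x : ZMod (2 * n), ∃! e, e ∈ S ∧ x ∈ e
  noncrossing : ∀ e ∈ S, ∀ f ∈ S, ¬ Crosses n e f

/-- A split move transforms a split `S` into a different split `S'` sharing exactly
`n - 2` chords with `S`. -/
def SplitMove (n : ℕ) (S S' : Finset (Finset (ZMod (2 * n)))) : Prop :=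
  IsSplit n S ∧ IsSplit n S' ∧ S ≠ S' ∧ (S ∩ S').card = n - 2

/-- `ChainLen R k a b` : `b` is reachable from `a` in exactly `k` steps of the relation `R`. -/
def ChainLen {α : Type*} (R : α → α → Prop) : ℕ → α → α → Prop
  | 0, a, b => a = b
  | (k + 1), a, b => ∃ c, R a c ∧ ChainLen R k c b

/-- The split distance: the minimal number of split moves transforming `S` into `T`. -/
noncomputable def splitDist (n : ℕ) (S T : Finset (Finset (ZMod (2 * n)))) : ℕ :=
  sInf {k | ChainLen (SplitMove n) k S T}

/-- The graph on `ZMod (2*n)` whose edges are the chords of `S` together with those of `T`. -/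
def unionGraph (n : ℕ) (S T : Finset (Finset (ZMod (2 * n)))) : SimpleGraph (ZMod (2 * n)) where
  Adj x y := x ≠ y ∧ ∃ e, (e ∈ S ∨ e ∈ T) ∧ x ∈ e ∧ y ∈ e
  symm := by
    constructor
    rintro x y ⟨hxy, e, he, hx, hy⟩
    exact ⟨Ne.symm hxy, e, he, hy, hx⟩
  loopless := by
    constructor
    rintro x ⟨h, -⟩
    exact h rfl

/-- `‖S,T‖`: the number of connected components (circles) of the multigraph obtained from
the chords of `S` (drawn inside the circle) and the chords of `T` (drawn outside). -/
noncomputable def circleCount (n : ℕ) (S T : Finset (Finset (ZMod (2 * n)))) : ℕ :=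
  Nat.card (unionGraph n S T).ConnectedComponent

end MultiCrossing

namespace SimpleGraph

variable {V : Type*} {G G' : SimpleGraph V}

lemma Reachable.mem_of_adj_mem {s : Set V} (hs : ∀ ⦃u w⦄, u ∈ s → G.Adj u w → w ∈ s)
    {u w : V} (h : G.Reachable u w) (hu : u ∈ s) : w ∈ s := by
  obtain ⟨p⟩ := h
  induction p with
  | nil => exact hu
  | cons huv _ ih => exact ih (hs hu huv)

lemma Reachable.of_adj_imp {s : Set V} (hs : ∀ ⦃u w⦄, u ∈ s → G.Adj u w → w ∈ s)
    (hGG' : ∀ ⦃u w⦄, u ∈ s → G.Adj u w → G'.Adj u w) {u w : V} (h : G.Reachable u w)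
    (hu : u ∈ s) : G'.Reachable u w :=
  (h.mem_of_adj_mem (s := {v | G'.Reachable u v ∧ v ∈ s})
    (fun _ _ hv hadj => ⟨hv.1.trans (hGG' hv.2 hadj).reachable, hs hv.2 hadj⟩)
    ⟨.rfl, hu⟩).1

lemma reachable_iff_of_adj_iff {x u w : V}
    (hadj : ∀ ⦃u w⦄, ¬ G.Reachable x u → (G.Adj u w ↔ G'.Adj u w)) (hu : ¬ G.Reachable x u) :
    G.Reachable u w ↔ G'.Reachable u w := by
  have hG : ∀ ⦃u w⦄, ¬ G.Reachable x u → G.Adj u w → ¬ G.Reachable x w := fun _ _ hu huw hw =>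
    hu (hw.trans huw.symm.reachable)
  exact ⟨fun h => h.of_adj_imp (s := {v | ¬ G.Reachable x v}) hG (fun _ _ hu => (hadj hu).mp) hu,
    fun h => h.of_adj_imp (s := {v | ¬ G.Reachable x v})
      (fun _ _ hu huw => hG hu ((hadj hu).mpr huw)) (fun _ _ hu => (hadj hu).mpr) hu⟩

/-- If `G'` differs from `G` only by edges inside the component of `x`, and in `G'` the vertices
`x` and `y` form a component of their own, then the rest `a` of the old component gives `G'` one
more component than `G`. -/
lemma card_connectedComponent_lt [Finite V] {x y a : V} (hxy : G.Reachable x y)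
    (hxa : G.Reachable x a) (hax : a ≠ x) (hay : a ≠ y)
    (hadj : ∀ ⦃u w⦄, ¬ G.Reachable x u → (G.Adj u w ↔ G'.Adj u w))
    (hx : ∀ ⦃w⦄, G'.Adj x w → w = y) (hy : ∀ ⦃w⦄, G'.Adj y w → w = x) :
    Nat.card G.ConnectedComponent < Nat.card G'.ConnectedComponent := by
  have hcompx : ∀ v, G'.Reachable x v → v = x ∨ v = y := fun _ h =>
    h.mem_of_adj_mem (s := {x, y}) (by
      rintro _ w (rfl | rfl) huw
      · simp [hx huw]
      · simp [hy huw]) (by simp)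
  let f (v : V) : G'.ConnectedComponent :=
    if G.Reachable x v then G'.connectedComponentMk a else G'.connectedComponentMk v
  have hf : ∀ v w, G.Reachable v w → f v = f w := fun v w h => by
    by_cases hv : G.Reachable x v
    · simp [f, hv, hv.trans h]
    · have hw : ¬ G.Reachable x w := fun hw => hv (hw.trans h.symm)
      simpa [f, hv, hw] using (reachable_iff_of_adj_iff hadj hv).mp h
  let F : G.ConnectedComponent → G'.ConnectedComponent :=
    ConnectedComponent.lift f fun v w p _ => hf v w p.reachable
  have hF_inj : Function.Injective F := by
    refine ConnectedComponent.ind₂ fun v w h => ConnectedComponent.sound ?_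
    change f v = f w at h
    by_cases hv : G.Reachable x v <;> by_cases hw : G.Reachable x w <;>
      simp only [f, hv, hw, if_true, if_false, ConnectedComponent.eq] at h
    · exact hv.symm.trans hw
    · exact absurd (hxa.trans ((reachable_iff_of_adj_iff hadj hw).mpr h.symm).symm) hw
    · exact absurd (hxa.trans ((reachable_iff_of_adj_iff hadj hv).mpr h).symm) hv
    · exact (reachable_iff_of_adj_iff hadj hv).mpr h
  have hF_x : G'.connectedComponentMk x ∉ Set.range F := by
    rintro ⟨C, hC⟩
    induction C using ConnectedComponent.ind with | h v => ?_
    change f v = _ at hC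
    by_cases hv : G.Reachable x v <;>
      simp only [f, hv, if_true, if_false, ConnectedComponent.eq] at hC
    · rcases hcompx a hC.symm with h | h
      exacts [hax h, hay h]
    · rcases hcompx v hC.symm with rfl | rfl
      exacts [hv .rfl, hv hxy]
  have := Fintype.ofFinite G.ConnectedComponent
  have := Fintype.ofFinite G'.ConnectedComponent
  simpa only [Nat.card_eq_fintype_card] using Fintype.card_lt_of_injective_of_notMem F hF_inj hF_x

end SimpleGraph

namespace MultiCrossing

section

variable {n : ℕ} {S T : Finset (Finset (ZMod (2 * n)))}

namespace ChainLen

variable {α : Type*} {R : α → α → Prop}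

lemma trans {j k : ℕ} {a b c : α} (hab : ChainLen R j a b) (hbc : ChainLen R k b c) :
    ChainLen R (j + k) a c := by
  induction j generalizing a with
  | zero =>
    obtain rfl : a = b := hab
    simpa using hbc
  | succ j ih =>
    obtain ⟨d, had, hdb⟩ := hab
    rw [Nat.add_right_comm]
    exact ⟨d, had, ih hdb⟩

lemma symm (hR : ∀ ⦃a b⦄, R a b → R b a) {k : ℕ} {a b : α} (h : ChainLen R k a b) :
    ChainLen R k b a := by
  induction k generalizing a with
  | zero => exact Eq.symm h
  | succ k ih =>
    obtain ⟨d, had, hdb⟩ := h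
    exact (ih hdb).trans ⟨a, hR had, rfl⟩

end ChainLen

lemma SplitMove.symm (h : SplitMove n S T) : SplitMove n T S :=
  ⟨h.2.1, h.1, h.2.2.1.symm, by rw [Finset.inter_comm]; exact h.2.2.2⟩

def reconnect (S : Finset (Finset (ZMod (2 * n)))) (x a y b : ZMod (2 * n)) :
    Finset (Finset (ZMod (2 * n))) :=
  insert {x, y} (insert {a, b} ((S.erase {x, a}).erase {y, b}))

namespace IsSplit

variable (hS : IsSplit n S) {x y : ZMod (2 * n)}
include hS

lemma eq_of_mem {e f : Finset (ZMod (2 * n))} (he : e ∈ S) (hf : f ∈ S) {z : ZMod (2 * n)}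
    (hze : z ∈ e) (hzf : z ∈ f) : e = f :=
  (hS.partitions z).unique ⟨he, hze⟩ ⟨hf, hzf⟩

lemma exists_pair_mem (z : ZMod (2 * n)) :
    ∃ w, w ≠ z ∧ ({z, w} : Finset (ZMod (2 * n))) ∈ S := by
  obtain ⟨e, ⟨he, hze⟩, -⟩ := hS.partitions z
  obtain ⟨u, v, huv, rfl⟩ := Finset.card_eq_two.mp (hS.card_two e he)
  rcases Finset.mem_insert.mp hze with rfl | hzv
  · exact ⟨v, huv.symm, he⟩
  · obtain rfl := Finset.mem_singleton.mp hzv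
    exact ⟨u, huv, by rwa [Finset.pair_comm]⟩

noncomputable def partner (z : ZMod (2 * n)) : ZMod (2 * n) :=
  (hS.exists_pair_mem z).choose

lemma partner_ne (z : ZMod (2 * n)) : hS.partner z ≠ z :=
  (hS.exists_pair_mem z).choose_spec.1

lemma pair_partner_mem (z : ZMod (2 * n)) : {z, hS.partner z} ∈ S :=
  (hS.exists_pair_mem z).choose_spec.2

lemma eq_pair_partner {e : Finset (ZMod (2 * n))} (he : e ∈ S) {z : ZMod (2 * n)}
    (hz : z ∈ e) : e = {z, hS.partner z} :=
  hS.eq_of_mem he (hS.pair_partner_mem z) hz (Finset.mem_insert_self _ _)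

lemma ne_of_pair_mem {u v : ZMod (2 * n)} (h : {u, v} ∈ S) : u ≠ v := by
  rintro rfl
  simpa using hS.card_two _ h

lemma partner_eq_of_pair_mem {u v : ZMod (2 * n)} (h : {u, v} ∈ S) : hS.partner u = v := by
  have hv : v ∈ ({u, hS.partner u} : Finset _) :=
    hS.eq_pair_partner h (Finset.mem_insert_self u _) ▸ by simp
  simpa [(hS.ne_of_pair_mem h).symm, eq_comm] using hv

@[simp]
lemma partner_partner (z : ZMod (2 * n)) : hS.partner (hS.partner z) = z :=
  hS.partner_eq_of_pair_mem (by rw [Finset.pair_comm]; exact hS.pair_partner_mem z)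

lemma partner_injective : Function.Injective hS.partner :=
  Function.LeftInverse.injective hS.partner_partner

lemma partner_eq_iff {p w : ZMod (2 * n)} : hS.partner p = w ↔ p = hS.partner w :=
  ⟨fun h => h ▸ (hS.partner_partner p).symm, fun h => h ▸ hS.partner_partner w⟩

lemma card_eq [NeZero n] : S.card = n := by
  have hcover : S.biUnion (fun e => e) = Finset.univ := Finset.eq_univ_of_forall fun z =>
    Finset.mem_biUnion.mpr ⟨_, hS.pair_partner_mem z, Finset.mem_insert_self _ _⟩
  have hcard := Finset.card_biUnion (s := S) (t := fun e => e) fun e he f hf hef =>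
    Finset.disjoint_left.mpr fun _ hze hzf => hef (hS.eq_of_mem he hf hze hzf)
  rw [hcover, Finset.card_univ, ZMod.card, Finset.sum_congr rfl hS.card_two, Finset.sum_const,
    smul_eq_mul] at hcard
  omega

lemma mem_reconnect_iff {e : Finset (ZMod (2 * n))} :
    e ∈ reconnect S x (hS.partner x) y (hS.partner y) ↔
      e = {x, y} ∨ e = {hS.partner x, hS.partner y} ∨
        ∃ p, e = {p, hS.partner p} ∧
          p ≠ x ∧ p ≠ y ∧ p ≠ hS.partner x ∧ p ≠ hS.partner y := by
  simp only [reconnect, Finset.mem_insert, Finset.mem_erase]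
  refine or_congr_right (or_congr_right ⟨fun ⟨hy, hx, he⟩ => ?_, ?_⟩)
  · obtain ⟨p, hp⟩ := Finset.card_pos.mp (hS.card_two e he ▸ two_pos)
    rw [hS.eq_pair_partner he hp] at hx hy ⊢
    refine ⟨p, rfl, ?_, ?_, ?_, ?_⟩ <;> rintro rfl
    · exact hx rfl
    · exact hy rfl
    · exact hx (by rw [hS.partner_partner, Finset.pair_comm])
    · exact hy (by rw [hS.partner_partner, Finset.pair_comm])
  · rintro ⟨p, rfl, hpx, hpy, hpa, hpb⟩
    refine ⟨fun h => ?_, fun h => ?_, hS.pair_partner_mem p⟩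
    · have := h ▸ Finset.mem_insert_self p _
      simp_all
    · have := h ▸ Finset.mem_insert_self p _
      simp_all

lemma notMem_pair_partner {w p : ZMod (2 * n)} (hpw : p ≠ w) (hpw' : p ≠ hS.partner w) :
    w ∉ ({p, hS.partner p} : Finset _) := by
  simp only [Finset.mem_insert, Finset.mem_singleton, not_or]
  exact ⟨hpw.symm, fun h => hpw' (by rw [h, hS.partner_partner])⟩

lemma reconnect_partitions (hxy : x ≠ y) (hya : y ≠ hS.partner x) (z : ZMod (2 * n)) :
    ∃! e, e ∈ reconnect S x (hS.partner x) y (hS.partner y) ∧ z ∈ e := by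
  have hnew_disj :
      z ∈ ({x, y} : Finset _) → z ∉ ({hS.partner x, hS.partner y} : Finset _) := by
    have := hS.partner_ne x
    have := hS.partner_ne y
    have := hS.partner_eq_iff (p := y) (w := x)
    simp only [Finset.mem_insert, Finset.mem_singleton]
    rintro (rfl | rfl) <;> grind
  have hold_avoids {p : ZMod (2 * n)}
      (hp : p ≠ x ∧ p ≠ y ∧ p ≠ hS.partner x ∧ p ≠ hS.partner y) :
      ∀ w ∈ ({x, y, hS.partner x, hS.partner y} : Finset _),
        w ∉ ({p, hS.partner p} : Finset _) := by
    obtain ⟨hpx, hpy, hpa, hpb⟩ := hp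
    intro w hw
    simp only [Finset.mem_insert, Finset.mem_singleton] at hw
    rcases hw with rfl | rfl | rfl | rfl
    · exact hS.notMem_pair_partner hpx hpa
    · exact hS.notMem_pair_partner hpy hpb
    · exact hS.notMem_pair_partner hpa (by rwa [hS.partner_partner])
    · exact hS.notMem_pair_partner hpb (by rwa [hS.partner_partner])
  simp only [hS.mem_reconnect_iff]
  by_cases hzxy : z ∈ ({x, y} : Finset _)
  · refine ⟨_, ⟨.inl rfl, hzxy⟩, ?_⟩
    rintro f ⟨rfl | rfl | ⟨p, rfl, hp⟩, hzf⟩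
    · rfl
    · exact absurd hzf (hnew_disj hzxy)
    · exact absurd hzf (hold_avoids hp z (by simp_all))
  by_cases hzab : z ∈ ({hS.partner x, hS.partner y} : Finset _)
  · refine ⟨_, ⟨.inr (.inl rfl), hzab⟩, ?_⟩
    rintro f ⟨rfl | rfl | ⟨p, rfl, hp⟩, hzf⟩
    · exact absurd hzab (hnew_disj hzf)
    · rfl
    · exact absurd hzf (hold_avoids hp z (by simp_all))
  · simp only [Finset.mem_insert, Finset.mem_singleton, not_or] at hzxy hzab
    refine ⟨_, ⟨.inr (.inr ⟨z, rfl, hzxy.1, hzxy.2, hzab.1, hzab.2⟩), by simp⟩, ?_⟩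
    rintro f ⟨rfl | rfl | ⟨p, rfl, hp⟩, hzf⟩
    · simp_all
    · simp_all
    · exact hS.eq_of_mem (hS.pair_partner_mem p) (hS.pair_partner_mem z) hzf (by simp)

lemma reconnect_card_two (hxy : x ≠ y) :
    ∀ e ∈ reconnect S x (hS.partner x) y (hS.partner y), e.card = 2 := by
  intro e he
  rcases hS.mem_reconnect_iff.mp he with rfl | rfl | ⟨p, rfl, -⟩
  · exact Finset.card_pair hxy
  · exact Finset.card_pair (hS.partner_injective.ne hxy)
  · exact Finset.card_pair (hS.partner_ne p).symm

lemma card_inter_reconnect [NeZero n] (hxy : x ≠ y) (hya : y ≠ hS.partner x) (hxyS : {x, y} ∉ S) :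
    (S ∩ reconnect S x (hS.partner x) y (hS.partner y)).card = n - 2 := by
  have hab : {hS.partner x, hS.partner y} ∉ S := fun hab => by
    have := hS.partner_eq_of_pair_mem hab
    rw [hS.partner_partner, eq_comm, hS.partner_eq_iff] at this
    exact hya this
  have hxa : {x, hS.partner x} ∈ S := hS.pair_partner_mem x
  have hyb : {y, hS.partner y} ∈ S.erase {x, hS.partner x} := by
    refine Finset.mem_erase.mpr ⟨fun h => ?_, hS.pair_partner_mem y⟩
    have : y ∈ ({x, hS.partner x} : Finset _) := h ▸ Finset.mem_insert_self y _
    simp [hxy.symm, hya] at this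
  rw [reconnect, Finset.inter_insert_of_notMem hxyS, Finset.inter_insert_of_notMem hab,
    Finset.inter_eq_right.mpr ((Finset.erase_subset _ _).trans (Finset.erase_subset _ _)),
    Finset.card_erase_of_mem hyb, Finset.card_erase_of_mem hxa, hS.card_eq]
  rfl

end IsSplit

lemma unionGraph_adj_iff (hS : IsSplit n S) (hT : IsSplit n T) {u w : ZMod (2 * n)} :
    (unionGraph n S T).Adj u w ↔ u ≠ w ∧ (w = hS.partner u ∨ w = hT.partner u) := by
  constructor
  · rintro ⟨huw, e, he, hu, hw⟩
    refine ⟨huw, ?_⟩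
    rcases he with he | he
    · rw [hS.eq_pair_partner he hu] at hw
      exact .inl (by simpa [huw.symm] using hw)
    · rw [hT.eq_pair_partner he hu] at hw
      exact .inr (by simpa [huw.symm] using hw)
  · rintro ⟨huw, rfl | rfl⟩
    · exact ⟨huw, _, .inl (hS.pair_partner_mem u), by simp, by simp⟩
    · exact ⟨huw, _, .inr (hT.pair_partner_mem u), by simp, by simp⟩

/-- Clockwise distance from `x` to `p`: the position of `p` when the circle is cut open at `x`. -/
def offset (x p : ZMod (2 * n)) : ℕ := (p - x).val

/-- `c` lies strictly between `a` and `b` once the circle is cut open at `x`. -/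
def LinBtw (x a b c : ZMod (2 * n)) : Prop :=
  offset x a < offset x c ∧ offset x c < offset x b ∨
    offset x b < offset x c ∧ offset x c < offset x a

/-- For `x ∈ cuts`: `p` and `q` lie in the same component of the circle with `cuts` removed. -/
def SameArc (x : ZMod (2 * n)) (cuts : Finset (ZMod (2 * n))) (p q : ZMod (2 * n)) : Prop :=
  ∀ c ∈ cuts, offset x p ≠ offset x c ∧ offset x q ≠ offset x c ∧
    (offset x p < offset x c ↔ offset x q < offset x c)

structure IsShortestNewChord (S T : Finset (Finset (ZMod (2 * n)))) (x y : ZMod (2 * n)) :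
    Prop where
  ne : x ≠ y
  mem_right : {x, y} ∈ T
  notMem_left : {x, y} ∉ S
  offset_le : ∀ u v, {u, v} ∈ T → {u, v} ∉ S → offset x y ≤ offset u v

@[simp]
lemma offset_self (x : ZMod (2 * n)) : offset x x = 0 := by
  simp [offset]

variable [NeZero n]

lemma offset_lt (x p : ZMod (2 * n)) : offset x p < 2 * n :=
  ZMod.val_lt _

lemma offset_injective (x : ZMod (2 * n)) : Function.Injective (offset x) := fun _ _ h =>
  sub_left_injective (ZMod.val_injective _ h)

lemma offset_ne {p q : ZMod (2 * n)} (x : ZMod (2 * n)) (h : p ≠ q) : offset x p ≠ offset x q :=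
  (offset_injective x).ne h

lemma offset_pos {p x : ZMod (2 * n)} (h : p ≠ x) : 0 < offset x p := by
  simpa [Nat.pos_iff_ne_zero] using offset_ne x h

lemma offset_add_offset (x a c : ZMod (2 * n)) :
    offset x a + offset a c = offset x c ∨ offset x a + offset a c = offset x c + 2 * n := by
  have h := ZMod.val_add (a - x) (c - a)
  rw [show a - x + (c - a) = c - x by ring] at h
  have := offset_lt x a
  have := offset_lt a c
  unfold offset at *
  rcases Nat.lt_or_ge ((a - x).val + (c - a).val) (2 * n) with hlt | hge
  · left; rw [h, Nat.mod_eq_of_lt hlt]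
  · right; rw [h, Nat.mod_eq_sub_mod hge, Nat.mod_eq_of_lt (by omega)]; omega

lemma strictBtw_iff (x a b c : ZMod (2 * n)) :
    StrictBtw n a b c ↔
      offset x a < offset x c ∧ offset x c < offset x b ∨
      offset x c < offset x b ∧ offset x b < offset x a ∨
      offset x b < offset x a ∧ offset x a < offset x c := by
  by_cases hca : c = a
  · subst hca
    simp only [StrictBtw, sub_self, ZMod.val_zero]
    omega
  have := offset_add_offset x a c
  have := offset_add_offset x a b
  have := offset_lt x a
  have := offset_lt x b
  have := offset_lt x c
  have := offset_lt a b
  have := offset_lt a c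
  have := offset_pos hca
  have := offset_ne x hca
  change 0 < offset a c ∧ offset a c < offset a b ↔ _
  omega

lemma offset_ne_of_disjoint (x : ZMod (2 * n)) {a b c d : ZMod (2 * n)}
    (h : Disjoint ({a, b} : Finset _) {c, d}) :
    offset x a ≠ offset x c ∧ offset x a ≠ offset x d ∧ offset x b ≠ offset x c ∧
      offset x b ≠ offset x d := by
  simp only [Finset.disjoint_insert_left, Finset.disjoint_singleton_left, Finset.mem_insert,
    Finset.mem_singleton, not_or] at h
  exact ⟨offset_ne x h.1.1, offset_ne x h.1.2, offset_ne x h.2.1, offset_ne x h.2.2⟩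

lemma not_crosses_of_linBtw_iff (x : ZMod (2 * n)) {a b c d : ZMod (2 * n)}
    (h : LinBtw x a b c ↔ LinBtw x a b d) : ¬ Crosses n {a, b} {c, d} := by
  rintro ⟨a', b', c', d', hab, hcd, hab', hcd', hdisj, hx⟩
  have mem_pair {u v w : ZMod (2 * n)} (hw : w ∈ ({u, v} : Finset _)) :
      offset x w = offset x u ∨ offset x w = offset x v := by
    rcases Finset.mem_insert.mp hw with rfl | hw
    · exact .inl rfl
    · exact .inr (by rw [Finset.mem_singleton.mp hw])
  have ha := mem_pair (hab ▸ Finset.mem_insert_self a' {b'})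
  have hb := mem_pair (hab ▸ Finset.mem_insert_of_mem (Finset.mem_singleton_self b'))
  have hc := mem_pair (hcd ▸ Finset.mem_insert_self c' {d'})
  have hd := mem_pair (hcd ▸ Finset.mem_insert_of_mem (Finset.mem_singleton_self d'))
  have := offset_ne x hab'
  have := offset_ne x hcd'
  have := offset_ne_of_disjoint x hdisj
  change Xor _ _ at hx
  rw [xor_def, strictBtw_iff x, strictBtw_iff x] at hx
  unfold LinBtw at h
  omega

lemma linBtw_iff_of_not_crosses (x : ZMod (2 * n)) {a b c d : ZMod (2 * n)} (hab : a ≠ b)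
    (hcd : c ≠ d) (hdisj : Disjoint ({a, b} : Finset _) {c, d})
    (h : ¬ Crosses n {a, b} {c, d}) : LinBtw x a b c ↔ LinBtw x a b d := by
  by_contra hx
  refine h ⟨a, b, c, d, rfl, rfl, hab, hcd, hdisj, ?_⟩
  have := offset_ne x hab
  have := offset_ne x hcd
  have := offset_ne_of_disjoint x hdisj
  change Xor _ _
  rw [xor_def, strictBtw_iff x, strictBtw_iff x]
  unfold LinBtw at hx
  omega

lemma IsSplit.linBtw_partner_iff (hS : IsSplit n S) (x : ZMod (2 * n)) {p r : ZMod (2 * n)}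
    (hrp : r ≠ p) (hr : r ≠ hS.partner p) :
    LinBtw x p (hS.partner p) r ↔ LinBtw x p (hS.partner p) (hS.partner r) := by
  have hdisj : Disjoint ({p, hS.partner p} : Finset _) {r, hS.partner r} :=
    Finset.disjoint_left.mpr fun _ hzp hzr => by
      have := hS.eq_of_mem (hS.pair_partner_mem p) (hS.pair_partner_mem r) hzp hzr
      have hr' : r ∈ ({p, hS.partner p} : Finset _) := this ▸ Finset.mem_insert_self r _
      simp [hrp, hr] at hr'
  exact linBtw_iff_of_not_crosses x (hS.partner_ne p).symm (hS.partner_ne r).symm hdisj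
    (hS.noncrossing _ (hS.pair_partner_mem p) _ (hS.pair_partner_mem r))

lemma circleCount_le (hS : IsSplit n S) (T : Finset (Finset (ZMod (2 * n)))) :
    circleCount n S T ≤ n := by
  let G := unionGraph n S T
  let chordOf (C : G.ConnectedComponent) : S := ⟨_, hS.pair_partner_mem C.out⟩
  have hinj : Function.Injective chordOf := fun C D hCD => by
    have hD : D.out ∈ (chordOf C).1 := by rw [hCD]; exact Finset.mem_insert_self _ _
    rw [← Quot.out_eq C, ← Quot.out_eq D]
    refine SimpleGraph.ConnectedComponent.sound ?_
    rcases Finset.mem_insert.mp hD with h | h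
    · rw [h]
    · rw [Finset.mem_singleton.mp h]
      exact SimpleGraph.Adj.reachable ⟨(hS.partner_ne _).symm, _, .inl (hS.pair_partner_mem _),
        Finset.mem_insert_self _ _, by simp⟩
  calc circleCount n S T ≤ Nat.card S := Nat.card_le_card_of_injective chordOf hinj
    _ = n := by simp [hS.card_eq]

lemma exists_isShortestNewChord (hS : IsSplit n S) (hT : IsSplit n T) (hST : S ≠ T) :
    ∃ x y, IsShortestNewChord S T x y := by
  have hnew : ∃ e ∈ T, e ∉ S := by
    by_contra! h
    exact hST (Finset.eq_of_subset_of_card_le h (by rw [hS.card_eq, hT.card_eq])).symm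
  have hex : ∃ m u v, {u, v} ∈ T ∧ {u, v} ∉ S ∧ offset u v = m := by
    obtain ⟨e, heT, heS⟩ := hnew
    obtain ⟨u, v, -, rfl⟩ := Finset.card_eq_two.mp (hT.card_two e heT)
    exact ⟨_, u, v, heT, heS, rfl⟩
  obtain ⟨x, y, hT', hS', hm⟩ := Nat.find_spec hex
  refine ⟨x, y, hT.ne_of_pair_mem hT', hT', hS', fun u v hu hv => ?_⟩
  rw [hm]
  exact Nat.find_min' hex ⟨u, v, hu, hv, rfl⟩

section ShortestNewChord

variable {x y : ZMod (2 * n)} (hS : IsSplit n S) (hT : IsSplit n T)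
  (h : IsShortestNewChord S T x y)
include hS hT h

/-- By minimality, the chords of `T` inside the arc from `x` to `y` are chords of `S` as well. -/
lemma IsShortestNewChord.partner_mem_arc {p : ZMod (2 * n)} (hp : 0 < offset x p)
    (hpy : offset x p < offset x y) :
    0 < offset x (hS.partner p) ∧ offset x (hS.partner p) < offset x y := by
  have hTx : hT.partner x = y := hT.partner_eq_of_pair_mem h.mem_right
  have hpx : p ≠ x := by rintro rfl; simp at hp
  have hpy' : p ≠ y := by rintro rfl; omega
  have hq := hT.linBtw_partner_iff x hpx (hTx ▸ hpy')
  set q := hT.partner p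
  simp only [LinBtw, hTx, offset_self] at hq
  have hqp : p ≠ q := (hT.partner_ne p).symm
  have hpq : {p, q} ∈ S := by
    by_contra hpq
    have := h.offset_le p q (hT.pair_partner_mem p) hpq
    have := h.offset_le q p (Finset.pair_comm p q ▸ hT.pair_partner_mem p)
      (Finset.pair_comm p q ▸ hpq)
    have := offset_add_offset x p q
    have := offset_add_offset x q p
    have := offset_ne x hqp
    have := offset_lt p q
    have := offset_lt q p
    omega
  rw [hS.partner_eq_of_pair_mem hpq]
  omega

lemma IsShortestNewChord.offset_partner_lt :
    offset x y < offset x (hS.partner y) ∧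
      offset x (hS.partner y) < offset x (hS.partner x) := by
  have hay : hS.partner x ≠ y := fun hay => h.notMem_left (hay ▸ hS.pair_partner_mem x)
  have hbx : hS.partner y ≠ x := fun hbx =>
    h.notMem_left (Finset.pair_comm y x ▸ hbx ▸ hS.pair_partner_mem y)
  have hax := offset_pos (hS.partner_ne x)
  have hby := offset_ne x (hS.partner_ne y)
  have hxa := hS.linBtw_partner_iff x h.ne.symm hay.symm
  have ha := h.partner_mem_arc hS hT (p := hS.partner x)
  have hb := h.partner_mem_arc hS hT (p := hS.partner y)
  simp only [LinBtw, IsSplit.partner_partner, offset_self] at hxa ha hb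
  have := offset_ne x hay
  have := offset_ne x hbx
  have := offset_pos h.ne.symm
  omega

lemma IsShortestNewChord.sameArc_partner {p : ZMod (2 * n)} (hpx : p ≠ x) (hpy : p ≠ y)
    (hpa : p ≠ hS.partner x) (hpb : p ≠ hS.partner y) :
    SameArc x {x, y, hS.partner x, hS.partner y} p (hS.partner p) := by
  have hqx : hS.partner p ≠ x := fun hq =>
    hpa (hS.partner_injective (hq.trans (hS.partner_partner x).symm))
  have hqy : hS.partner p ≠ y := fun hq =>
    hpb (hS.partner_injective (hq.trans (hS.partner_partner y).symm))
  have hqa : hS.partner p ≠ hS.partner x := fun hq => hpx (hS.partner_injective hq)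
  have hqb : hS.partner p ≠ hS.partner y := fun hq => hpy (hS.partner_injective hq)
  have hp := h.partner_mem_arc hS hT (p := p)
  have hq := h.partner_mem_arc hS hT (p := hS.partner p)
  have hxa := hS.linBtw_partner_iff x hpx hpa
  have hyb := hS.linBtw_partner_iff x hpy hpb
  have := h.offset_partner_lt hS hT
  have := offset_pos hpx
  have := offset_pos hqx
  have := offset_ne x hpy
  have := offset_ne x hpa
  have := offset_ne x hpb
  have := offset_ne x hqy
  have := offset_ne x hqa
  have := offset_ne x hqb
  simp only [SameArc, Finset.forall_mem_insert, Finset.mem_singleton, forall_eq, LinBtw,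
    offset_self, IsSplit.partner_partner] at hq hxa hyb ⊢
  omega

lemma IsShortestNewChord.mem_reconnect_cases {e : Finset (ZMod (2 * n))}
    (he : e ∈ reconnect S x (hS.partner x) y (hS.partner y)) :
    e = {x, y} ∨ e = {hS.partner x, hS.partner y} ∨ ∃ p, e = {p, hS.partner p} ∧ e ∈ S ∧
      SameArc x {x, y, hS.partner x, hS.partner y} p (hS.partner p) := by
  rcases hS.mem_reconnect_iff.mp he with rfl | rfl | ⟨p, rfl, hpx, hpy, hpa, hpb⟩
  · exact .inl rfl
  · exact .inr (.inl rfl)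
  · exact .inr (.inr ⟨p, rfl, hS.pair_partner_mem p, h.sameArc_partner hS hT hpx hpy hpa hpb⟩)

lemma IsShortestNewChord.noncrossing_reconnect :
    ∀ e ∈ reconnect S x (hS.partner x) y (hS.partner y),
      ∀ f ∈ reconnect S x (hS.partner x) y (hS.partner y), ¬ Crosses n e f := by
  intro e he f hf
  have := h.offset_partner_lt hS hT
  have := offset_pos h.ne.symm
  rcases h.mem_reconnect_cases hS hT he with rfl | rfl | ⟨p, rfl, hpS, hp⟩ <;>
    rcases h.mem_reconnect_cases hS hT hf with rfl | rfl | ⟨r, rfl, hrS, hr⟩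
  all_goals first
    | exact hS.noncrossing _ hpS _ hrS
    | apply not_crosses_of_linBtw_iff x
      simp only [SameArc, Finset.forall_mem_insert, Finset.mem_singleton, forall_eq, LinBtw,
        offset_self] at *
      omega

lemma IsShortestNewChord.isSplit_reconnect (hya : y ≠ hS.partner x) :
    IsSplit n (reconnect S x (hS.partner x) y (hS.partner y)) :=
  ⟨hS.reconnect_card_two h.ne, hS.reconnect_partitions h.ne hya, h.noncrossing_reconnect hS hT⟩

end ShortestNewChord

/-- Reconnecting along a shortest new chord `{x, y}` splits `{x, y}` off as a circle of its own. -/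
lemma exists_splitMove_circleCount_lt (hS : IsSplit n S) (hT : IsSplit n T) (hST : S ≠ T) :
    ∃ S', SplitMove n S S' ∧ circleCount n S T < circleCount n S' T := by
  obtain ⟨x, y, h⟩ := exists_isShortestNewChord hS hT hST
  have hya : y ≠ hS.partner x := fun hya => h.notMem_left (hya ▸ hS.pair_partner_mem x)
  have hS' := h.isSplit_reconnect hS hT hya
  set S' := reconnect S x (hS.partner x) y (hS.partner y)
  have hxyS' : {x, y} ∈ S' := hS.mem_reconnect_iff.mpr (.inl rfl)
  refine ⟨S', ⟨hS, hS', fun hSS' => h.notMem_left (hSS' ▸ hxyS'),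
    hS.card_inter_reconnect h.ne hya h.notMem_left⟩, ?_⟩
  have hTx := hT.partner_eq_of_pair_mem h.mem_right
  have hTy := hT.partner_eq_of_pair_mem (Finset.pair_comm x y ▸ h.mem_right)
  have hS'x := hS'.partner_eq_of_pair_mem hxyS'
  have hS'y := hS'.partner_eq_of_pair_mem (Finset.pair_comm x y ▸ hxyS')
  let G := unionGraph n S T
  have hxy : G.Reachable x y :=
    ((unionGraph_adj_iff hS hT).mpr ⟨h.ne, .inr hTx.symm⟩).reachable
  have hxa : G.Reachable x (hS.partner x) :=
    ((unionGraph_adj_iff hS hT).mpr ⟨(hS.partner_ne x).symm, .inl rfl⟩).reachable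
  have hyb : G.Reachable y (hS.partner y) :=
    ((unionGraph_adj_iff hS hT).mpr ⟨(hS.partner_ne y).symm, .inl rfl⟩).reachable
  refine SimpleGraph.card_connectedComponent_lt hxy hxa (hS.partner_ne x) hya.symm
    (fun u w hu => ?_) (fun w hw => ?_) (fun w hw => ?_)
  · have hux : u ≠ x := by rintro rfl; exact hu .rfl
    have huy : u ≠ y := by rintro rfl; exact hu hxy
    have hua : u ≠ hS.partner x := by rintro rfl; exact hu hxa
    have hub : u ≠ hS.partner y := by rintro rfl; exact hu (hxy.trans hyb)
    have hS'u := hS'.partner_eq_of_pair_mem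
      (hS.mem_reconnect_iff.mpr (.inr (.inr ⟨u, rfl, hux, huy, hua, hub⟩)))
    rw [unionGraph_adj_iff hS hT, unionGraph_adj_iff hS' hT, hS'u]
  · rw [unionGraph_adj_iff hS' hT, hS'x, hTx, or_self] at hw
    exact hw.2
  · rw [unionGraph_adj_iff hS' hT, hS'y, hTy, or_self] at hw
    exact hw.2

lemma exists_chainLen_add_circleCount_le (hT : IsSplit n T) {S : Finset (Finset (ZMod (2 * n)))}
    (hS : IsSplit n S) :
    ∃ k, ChainLen (SplitMove n) k S T ∧ k + circleCount n S T ≤ n := by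
  by_cases hST : S = T
  · subst hST
    exact ⟨0, rfl, by simpa using circleCount_le hS S⟩
  obtain ⟨S', hmove, hlt⟩ := exists_splitMove_circleCount_lt hS hT hST
  obtain ⟨k, hk, hle⟩ := exists_chainLen_add_circleCount_le hT hmove.2.1
  exact ⟨k + 1, ⟨S', hmove, hk⟩, by omega⟩
termination_by n - circleCount n S T
decreasing_by have := circleCount_le hmove.2.1 T; omega

end

/-- For every `n ≥ 2` and any splits `U`, `V`, `T` of the same `2n` points,
`‖U,T‖ + ‖V,T‖ ≤ 2n - d(U,V)`. -/
theorem circleCount_add_circleCount_le (n : ℕ) (hn : 2 ≤ n)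
    (U V T : Finset (Finset (ZMod (2 * n))))
    (hU : IsSplit n U) (hV : IsSplit n V) (hT : IsSplit n T) :
    circleCount n U T + circleCount n V T ≤ 2 * n - splitDist n U V := by
  have : NeZero n := ⟨by omega⟩
  obtain ⟨k, hUT, hk⟩ := exists_chainLen_add_circleCount_le hT hU
  obtain ⟨l, hVT, hl⟩ := exists_chainLen_add_circleCount_le hT hV
  have hd : splitDist n U V ≤ k + l :=
    Nat.sInf_le (hUT.trans (hVT.symm fun _ _ => SplitMove.symm))
  omega

end MultiCrossing
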